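/- Let x̃ᵢ = min{xᵢ, x*} for some x* ≥ 0 and set E^d = Σᵢ p̄ᵢ·min{xᵢ, x*}. Then for every convex function E : [0,∞) → [0,∞), the following are equivalent: (i) E(p) ≤ Ω_{p̄,x}(p) for all p ≥ 0 and E(0) ≤ E^d; (ii) E(p) ≤ Ω_{p̄,x̃}(p) for all p ≥ 0. -/

import Mathlib

open MeasureTheory Set Finset

/-- The E-p transform of a signal `P`: the energy required above power rating `p`. -/
noncomputable def EpTransform (P : ℝ → ℝ) (p : ℝ) : ℝ :=
  ∫ t in Set.Ioi (0:ℝ), max (P t - p) 0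

/-- The worst-case reference signal `R_{p̄,x}(t) = Σᵢ p̄ᵢ·𝟙[0 ≤ t < xᵢ]`. -/
noncomputable def worstCase {n : ℕ} (pbar x : Fin n → ℝ) (t : ℝ) : ℝ :=
  ∑ i, if 0 ≤ t ∧ t < x i then pbar i else 0

/-- The discharging capacity curve `Ω_{p̄,x}`. -/
noncomputable def capacity {n : ℕ} (pbar x : Fin n → ℝ) (p : ℝ) : ℝ :=
  EpTransform (worstCase pbar x) p

/-!
Write `x̃ = min x x*` and let `q = R_{p̄,x}(x*)` be the power of the devices that outlast `x*`.
The two reference signals agree on `[0, x*)`; after `x*` the truncated one vanishes while the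
original one stays below `q`. Hence `Ω_{p̄,x̃} ≤ Ω_{p̄,x}`, with equality on `[q, ∞)`, and on
`[0, q]` the truncated curve is the line `E^d - p x*`. A convex `E` below `E^d` at `0` and below
`Ω_{p̄,x}(q) = E^d - q x*` at `q` stays below this line in between.
-/

lemma ConvexOn.le_affine_of_mem_Icc {s : Set ℝ} {f : ℝ → ℝ} (hf : ConvexOn ℝ s f)
    {a b c m t : ℝ} (ha : a ∈ s) (hb : b ∈ s) (ht : t ∈ Icc a b)
    (hfa : f a ≤ c - a * m) (hfb : f b ≤ c - b * m) : f t ≤ c - t * m := by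
  have hg := (hf.add ((LinearMap.mulLeft ℝ m).convexOn hf.1)).le_on_segment ha hb
    ((segment_eq_Icc (ht.1.trans ht.2)).symm ▸ ht)
  simp only [Pi.add_apply, LinearMap.mulLeft_apply] at hg
  linarith [max_le (by linarith : f a + m * a ≤ c) (by linarith : f b + m * b ≤ c), mul_comm m t]

section EpTransform

variable {P Q : ℝ → ℝ} {p : ℝ}

lemma integrableOn_max_sub_zero (hQ : IntegrableOn Q (Ioi 0)) (hp : 0 ≤ p) :
    IntegrableOn (fun t => max (Q t - p) 0) (Ioi 0) := by
  refine hQ.pos_part.mono' ?_ (ae_of_all _ fun t => ?_)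
  · exact (hQ.aestronglyMeasurable.sub aestronglyMeasurable_const).sup aestronglyMeasurable_const
  · rw [Real.norm_of_nonneg (le_max_right _ _)]
    exact max_le_max_right 0 (by linarith)

lemma EpTransform_mono (hQ : IntegrableOn Q (Ioi 0)) (hp : 0 ≤ p) (hPQ : ∀ t, P t ≤ Q t) :
    EpTransform P p ≤ EpTransform Q p :=
  integral_mono_of_nonneg (ae_of_all _ fun _ => le_max_right _ _)
    (integrableOn_max_sub_zero hQ hp)
    (ae_of_all _ fun t => max_le_max_right 0 (sub_le_sub_right (hPQ t) p))

lemma EpTransform_zero (hP : ∀ t, 0 ≤ P t) : EpTransform P 0 = ∫ t in Ioi 0, P t := by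
  simp only [EpTransform, sub_zero, max_eq_left (hP _)]

lemma EpTransform_congr {a : ℝ} (heq : ∀ t ∈ Ioo 0 a, P t = Q t)
    (hP : ∀ t, a ≤ t → P t ≤ p) (hQ : ∀ t, a ≤ t → Q t ≤ p) :
    EpTransform P p = EpTransform Q p := by
  refine setIntegral_congr_fun measurableSet_Ioi fun t (ht : 0 < t) => ?_
  rcases lt_or_ge t a with hta | hat
  · simp only [heq t ⟨ht, hta⟩]
  · simp only [max_eq_right (sub_nonpos.2 (hP t hat)), max_eq_right (sub_nonpos.2 (hQ t hat))]

lemma EpTransform_eq_integral_sub_mul {a : ℝ} (hPi : IntegrableOn P (Ioi 0)) (ha : 0 ≤ a)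
    (hp : 0 ≤ p) (hge : ∀ t ∈ Ioo 0 a, p ≤ P t) (hzero : ∀ t, a ≤ t → P t = 0) :
    EpTransform P p = (∫ t in Ioi 0, P t) - p * a := by
  have hcut : EqOn (fun t => max (P t - p) 0) (fun t => P t - (Iio a).indicator (fun _ => p) t)
      (Ioi 0) := by
    intro t (ht : 0 < t)
    rcases lt_or_ge t a with hta | hat
    · simp [hta, sub_nonneg.2 (hge t ⟨ht, hta⟩)]
    · simp [hzero t hat, not_lt.2 hat, hp]
  have hind : IntegrableOn ((Iio a).indicator fun _ => p) (Ioi 0) := by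
    rw [IntegrableOn, integrable_indicator_iff measurableSet_Iio, IntegrableOn,
      Measure.restrict_restrict measurableSet_Iio, Iio_inter_Ioi]
    exact integrableOn_const (by simp)
  rw [EpTransform, setIntegral_congr_fun measurableSet_Ioi hcut, integral_sub hPi hind,
    integral_indicator_const _ measurableSet_Iio, measureReal_restrict_apply measurableSet_Iio,
    Iio_inter_Ioi, Real.volume_real_Ioo_of_le ha, sub_zero, smul_eq_mul, mul_comm]

end EpTransform

section worstCase

lemma integrable_indicator_Ico_const {a b c : ℝ} : Integrable ((Ico a b).indicator fun _ => c) :=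
  (integrable_indicator_iff measurableSet_Ico).2 (integrableOn_const (by simp))

variable {n : ℕ} (pbar : Fin n → ℝ)

lemma worstCase_eq_sum_indicator (x : Fin n → ℝ) :
    worstCase pbar x = fun t => ∑ i, (Ico 0 (x i)).indicator (fun _ => pbar i) t := by
  ext t
  simp [worstCase, indicator_apply]

lemma integrable_worstCase (x : Fin n → ℝ) : Integrable (worstCase pbar x) := by
  rw [worstCase_eq_sum_indicator]
  exact integrable_finsetSum _ fun i _ => integrable_indicator_Ico_const

lemma integral_worstCase {x : Fin n → ℝ} (hx : ∀ i, 0 ≤ x i) :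
    ∫ t in Ioi 0, worstCase pbar x t = ∑ i, pbar i * x i := by
  rw [worstCase_eq_sum_indicator,
    integral_finsetSum _ fun i _ => integrable_indicator_Ico_const.integrableOn]
  refine Finset.sum_congr rfl fun i _ => ?_
  rw [integral_indicator_const _ measurableSet_Ico, measureReal_restrict_apply measurableSet_Ico,
    show Ico 0 (x i) ∩ Ioi 0 = Ioo 0 (x i) from
      Set.ext fun _ => ⟨fun ⟨⟨_, h⟩, h'⟩ => ⟨h', h⟩, fun ⟨h', h⟩ => ⟨⟨h'.le, h⟩, h'⟩⟩,
    Real.volume_real_Ioo_of_le (hx i), sub_zero, smul_eq_mul, mul_comm]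

variable {pbar}

lemma worstCase_nonneg (hp : ∀ i, 0 ≤ pbar i) (x : Fin n → ℝ) (t : ℝ) :
    0 ≤ worstCase pbar x t :=
  Finset.sum_nonneg fun i _ => ite_nonneg (hp i) le_rfl

lemma worstCase_mono (hp : ∀ i, 0 ≤ pbar i) {x y : Fin n → ℝ} (hxy : ∀ i, x i ≤ y i) (t : ℝ) :
    worstCase pbar x t ≤ worstCase pbar y t :=
  Finset.sum_le_sum fun i _ => by
    by_cases h : 0 ≤ t ∧ t < x i
    · simp [h, h.2.trans_le (hxy i)]
    · simpa only [h, if_false] using ite_nonneg (hp i) le_rfl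

lemma worstCase_antitoneOn (hp : ∀ i, 0 ≤ pbar i) (x : Fin n → ℝ) :
    AntitoneOn (worstCase pbar x) (Ici 0) := fun s (hs : 0 ≤ s) t _ hst =>
  Finset.sum_le_sum fun i _ => by
    by_cases h : 0 ≤ t ∧ t < x i
    · simp [h, hs, hst.trans_lt h.2]
    · simpa only [h, if_false] using ite_nonneg (hp i) le_rfl

lemma worstCase_eq_zero {x : Fin n → ℝ} {t : ℝ} (hxt : ∀ i, x i ≤ t) : worstCase pbar x t = 0 :=
  Finset.sum_eq_zero fun i _ => if_neg fun h => (h.2.trans_le (hxt i)).false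

lemma worstCase_truncate_of_lt (x : Fin n → ℝ) {xs t : ℝ} (ht : t < xs) :
    worstCase pbar (fun i => min (x i) xs) t = worstCase pbar x t :=
  Finset.sum_congr rfl fun i _ => by simp [ht]

end worstCase

section capacity

variable {n : ℕ} {pbar x : Fin n → ℝ} {p : ℝ}

lemma capacity_zero (hp : ∀ i, 0 ≤ pbar i) (hx : ∀ i, 0 ≤ x i) :
    capacity pbar x 0 = ∑ i, pbar i * x i := by
  rw [capacity, EpTransform_zero (worstCase_nonneg hp x), integral_worstCase pbar hx]

lemma capacity_mono (hp : ∀ i, 0 ≤ pbar i) {y : Fin n → ℝ} (hxy : ∀ i, x i ≤ y i)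
    (hp0 : 0 ≤ p) : capacity pbar x p ≤ capacity pbar y p :=
  EpTransform_mono (integrable_worstCase pbar y).integrableOn hp0 (worstCase_mono hp hxy)

variable {xs : ℝ}

lemma capacity_truncate_of_worstCase_le (hp : ∀ i, 0 ≤ pbar i) (hxs : 0 ≤ xs)
    (hq : worstCase pbar x xs ≤ p) :
    capacity pbar (fun i => min (x i) xs) p = capacity pbar x p := by
  have hp0 : 0 ≤ p := (worstCase_nonneg hp x xs).trans hq
  refine EpTransform_congr (a := xs) (fun t ht => worstCase_truncate_of_lt x ht.2)
    (fun t ht => ?_) (fun t ht => ?_)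
  · rw [worstCase_eq_zero fun i => (min_le_right _ _).trans ht]
    exact hp0
  · exact (worstCase_antitoneOn hp x hxs (hxs.trans ht) ht).trans hq

lemma capacity_truncate_of_le_worstCase (hp : ∀ i, 0 ≤ pbar i) (hx : ∀ i, 0 ≤ x i)
    (hxs : 0 ≤ xs) (hp0 : 0 ≤ p) (hq : p ≤ worstCase pbar x xs) :
    capacity pbar (fun i => min (x i) xs) p = ∑ i, pbar i * min (x i) xs - p * xs := by
  rw [capacity, ← integral_worstCase pbar fun i => le_min (hx i) hxs]
  refine EpTransform_eq_integral_sub_mul (integrable_worstCase pbar _).integrableOn hxs hp0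
    (fun t ht => ?_) (fun t ht => worstCase_eq_zero fun i => (min_le_right _ _).trans ht)
  rw [worstCase_truncate_of_lt x ht.2]
  exact hq.trans (worstCase_antitoneOn hp x ht.1.le hxs ht.2.le)

end capacity

theorem truncated_capacity_domination_general {n : ℕ} (pbar x : Fin n → ℝ)
    (hp : ∀ i, 0 < pbar i) (hx : ∀ i, 0 ≤ x i)
    (xs : ℝ) (hxs : 0 ≤ xs)
    (E : ℝ → ℝ) (hconv : ConvexOn ℝ (Set.Ici 0) E) :
    ((∀ p ≥ (0:ℝ), E p ≤ capacity pbar x p) ∧ E 0 ≤ ∑ i, pbar i * min (x i) xs) ↔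
      (∀ p ≥ (0:ℝ), E p ≤ capacity pbar (fun i => min (x i) xs) p) := by
  have hpbar i : 0 ≤ pbar i := (hp i).le
  set q := worstCase pbar x xs
  have hq0 : 0 ≤ q := worstCase_nonneg hpbar x xs
  refine ⟨fun ⟨hE, hE0⟩ p (hp0 : 0 ≤ p) => ?_, fun hE => ⟨fun p hp0 => ?_, ?_⟩⟩
  · rcases le_total q p with hqp | hpq
    · rw [capacity_truncate_of_worstCase_le hpbar hxs hqp]
      exact hE p hp0
    rw [capacity_truncate_of_le_worstCase hpbar hx hxs hp0 hpq]
    have hEq : E q ≤ ∑ i, pbar i * min (x i) xs - q * xs := by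
      rw [← capacity_truncate_of_le_worstCase hpbar hx hxs hq0 le_rfl,
        capacity_truncate_of_worstCase_le hpbar hxs le_rfl]
      exact hE q hq0
    exact hconv.le_affine_of_mem_Icc self_mem_Ici hq0 ⟨hp0, hpq⟩ (by simpa using hE0) hEq
  · exact (hE p hp0).trans (capacity_mono hpbar (fun i => min_le_left _ _) hp0)
  · simpa [capacity_zero hpbar fun i => le_min (hx i) hxs] using hE 0 le_rfl

/-- For a convex nonnegative curve `E` on `[0,∞)`: domination by the original capacity curve
together with `E(0) ≤ E^d` is equivalent to domination by the truncated-fleet capacity curve,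
where `x̃ᵢ = min{xᵢ, x*}` and `E^d = Σᵢ p̄ᵢ·min{xᵢ, x*}`. -/
theorem truncated_capacity_domination {n : ℕ} (pbar x : Fin n → ℝ)
    (hp : ∀ i, 0 < pbar i) (hx : ∀ i, 0 ≤ x i)
    (xs : ℝ) (hxs : 0 ≤ xs)
    (E : ℝ → ℝ) (hconv : ConvexOn ℝ (Set.Ici 0) E) (hnonneg : ∀ p ≥ (0:ℝ), 0 ≤ E p) :
    ((∀ p ≥ (0:ℝ), E p ≤ capacity pbar x p) ∧ E 0 ≤ ∑ i, pbar i * min (x i) xs) ↔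
      (∀ p ≥ (0:ℝ), E p ≤ capacity pbar (fun i => min (x i) xs) p) :=
  truncated_capacity_domination_general pbar x hp hx xs hxs E hconv
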